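/- Let J be a convex polytope in ℝ^d and I a convex polytope whose extreme points lie in ℤ^d, with 0 ∈ I. Then the number of lattice points in the inner boundary ∂⁻_I J = J \ (J ⊖ I) is at most the number of lattice points in the outer boundary ∂⁺_I J = (J ⊕ I) \ J. -/

import Mathlib

open Set Pointwise

/-- The lattice points: points of `ℝ^d` with all coordinates integers. -/
def IsLatticePt {d : ℕ} (x : EuclideanSpace ℝ (Fin d)) : Prop :=
  ∀ i, ∃ n : ℤ, x i = (n : ℝ)

/-- Erosion `J ⊖ I = {x | ∀ i ∈ I, x + i ∈ J}`. -/
def erode {d : ℕ} (J I : Set (EuclideanSpace ℝ (Fin d))) : Set (EuclideanSpace ℝ (Fin d)) :=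
  {x | ∀ i ∈ I, x + i ∈ J}

/-- Inner morphological boundary `∂⁻_I J = J \ (J ⊖ I)`. -/
def innerBd {d : ℕ} (J I : Set (EuclideanSpace ℝ (Fin d))) : Set (EuclideanSpace ℝ (Fin d)) :=
  J \ erode J I

/-- Outer morphological boundary `∂⁺_I J = (J ⊕ I) \ J`. -/
def outerBd {d : ℕ} (J I : Set (EuclideanSpace ℝ (Fin d))) : Set (EuclideanSpace ℝ (Fin d)) :=
  (J + I) \ J

/-!
For every continuous functional `N` fix a vertex `u N` of `I` maximising `N` on `I`. If `x` lies
outside the erosion `J ⊖ I`, some `x + i` is strictly separated from `J` by some `N`, hence so is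
`x + u N`. Well-order the functionals and send `x` to `x + u N` for the least such `N`. This point
lies outside `J`, and the map is injective: if `x + u N = x' + u N'` with `N < N'`, then
`N (x' + u N) ≥ N (x' + u N') = N (x + u N) > sup N(J)`, so `N` would already separate
`x' + u N` from `J`, contradicting the minimality of `N'`. Translating by a vertex of `I` keeps
lattice points lattice points.
-/

section Translation

variable {E : Type*} [AddCommGroup E] [Module ℝ E] [TopologicalSpace E]

def separatingFunctionals (J : Set E) (u : StrongDual ℝ E → E) (x : E) : Set (StrongDual ℝ E) :=
  {N | ∀ y ∈ J, N y < N (x + u N)}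

variable {J I : Set E} {u : StrongDual ℝ E → E}

theorem add_notMem_of_mem_separatingFunctionals {x : E} {N : StrongDual ℝ E}
    (hN : N ∈ separatingFunctionals J u x) : x + u N ∉ J :=
  fun h => (hN _ h).false

theorem add_ne_add_of_mem_separatingFunctionals (hu : ∀ N M : StrongDual ℝ E, N (u M) ≤ N (u N))
    {x x' : E} {N : StrongDual ℝ E} (hN : N ∈ separatingFunctionals J u x)
    (hN' : N ∉ separatingFunctionals J u x') (M : StrongDual ℝ E) : x + u N ≠ x' + u M := by
  intro h
  obtain ⟨y, hy, hle⟩ : ∃ y ∈ J, N (x' + u N) ≤ N y := by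
    simpa [separatingFunctionals] using hN'
  have := hN y hy
  rw [h, map_add] at this
  rw [map_add] at hle
  linarith [hu N M]

variable [IsTopologicalAddGroup E] [ContinuousSMul ℝ E] [LocallyConvexSpace ℝ E]

theorem separatingFunctionals_nonempty (hJ : Convex ℝ J) (hJcl : IsClosed J)
    (hu : ∀ N : StrongDual ℝ E, IsMaxOn N I (u N)) {x : E} (hx : ¬∀ i ∈ I, x + i ∈ J) :
    (separatingFunctionals J u x).Nonempty := by
  obtain ⟨i, hi, hxi⟩ := not_forall₂.mp hx
  obtain ⟨N, r, hJr, hr⟩ := geometric_hahn_banach_closed_point hJ hJcl hxi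
  refine ⟨N, fun y hy => (hJr y hy).trans (hr.trans_le ?_)⟩
  simpa only [map_add, add_le_add_iff_left] using isMaxOn_iff.mp (hu N) i hi

variable [T2Space E]

theorem IsCompact.exists_mem_extremePoints_isMaxOn {I : Set E} (hI : IsCompact I)
    (hIne : I.Nonempty) (N : StrongDual ℝ E) : ∃ v ∈ I.extremePoints ℝ, IsMaxOn N I v := by
  obtain ⟨z, hzI, hz⟩ := hI.exists_isMaxOn hIne N.continuous.continuousOn
  have hexp : IsExposed ℝ I {y ∈ I | ∀ w ∈ I, N w ≤ N y} := fun _ => ⟨N, rfl⟩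
  obtain ⟨v, hv⟩ := (hexp.isCompact hI).extremePoints_nonempty ⟨z, hzI, hz⟩
  exact ⟨v, hexp.isExtreme.extremePoints_subset_extremePoints hv, hv.1.2⟩

theorem exists_injOn_add_extremePoints (hJ : Convex ℝ J) (hJcl : IsClosed J)
    (hI : IsCompact I) :
    ∃ f : E → E, InjOn f {x | ¬∀ i ∈ I, x + i ∈ J} ∧
      ∀ x ∈ {x | ¬∀ i ∈ I, x + i ∈ J}, f x ∉ J ∧ f x - x ∈ I.extremePoints ℝ := by
  rcases I.eq_empty_or_nonempty with rfl | hIne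
  · exact ⟨id, by simp⟩
  choose u hu_ext hu_max using hI.exists_mem_extremePoints_isMaxOn hIne
  have hu : ∀ N M : StrongDual ℝ E, N (u M) ≤ N (u N) :=
    fun N M => hu_max N (extremePoints_subset (hu_ext M))
  have hwf : WellFounded (WellOrderingRel : StrongDual ℝ E → StrongDual ℝ E → Prop) :=
    IsWellFounded.wf
  choose! N hN hNmin using fun x (hx : ¬∀ i ∈ I, x + i ∈ J) =>
    hwf.has_min _ (separatingFunctionals_nonempty hJ hJcl hu_max hx)
  refine ⟨fun x => x + u (N x), fun x hx x' hx' h => ?_, fun x hx => ?_⟩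
  · rcases trichotomous_of WellOrderingRel (N x) (N x') with hlt | heq | hgt
    · exact absurd h <| add_ne_add_of_mem_separatingFunctionals hu (hN x hx)
        (hNmin x' hx' _ · hlt) _
    · exact add_right_cancel (h.trans (by rw [heq]))
    · exact absurd h.symm <| add_ne_add_of_mem_separatingFunctionals hu (hN x' hx')
        (hNmin x hx _ · hgt) _
  · exact ⟨add_notMem_of_mem_separatingFunctionals (hN x hx), by simpa using hu_ext (N x)⟩

end Translation

section Lattice

variable {d : ℕ}

theorem IsLatticePt.add {x y : EuclideanSpace ℝ (Fin d)} (hx : IsLatticePt x)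
    (hy : IsLatticePt y) : IsLatticePt (x + y) := fun i => by
  obtain ⟨m, hm⟩ := hx i
  obtain ⟨n, hn⟩ := hy i
  exact ⟨m + n, by simp [hm, hn]⟩

theorem Bornology.IsBounded.finite_inter_isLatticePt {s : Set (EuclideanSpace ℝ (Fin d))}
    (hs : Bornology.IsBounded s) : (s ∩ {x | IsLatticePt x}).Finite := by
  obtain ⟨R, hR⟩ := hs.subset_closedBall 0
  refine ((Set.Finite.pi fun _ => Set.finite_Icc (-⌈R⌉) ⌈R⌉).image
    fun n : Fin d → ℤ => WithLp.toLp 2 fun i => (n i : ℝ)).subset ?_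
  rintro x ⟨hxs, hx⟩
  choose n hn using hx
  refine ⟨n, fun i _ => ?_, by ext i; simp [hn]⟩
  have hxR : |(n i : ℝ)| ≤ ⌈R⌉ := by
    rw [← hn, ← Real.norm_eq_abs]
    exact (PiLp.norm_apply_le x i).trans <| (mem_closedBall_zero_iff.mp (hR hxs)).trans
      (Int.le_ceil R)
  exact abs_le.mp (by exact_mod_cast hxR)

end Lattice

theorem stmt2_general {d : ℕ} (J I : Set (EuclideanSpace ℝ (Fin d)))
    (SJ : Set (EuclideanSpace ℝ (Fin d))) (hSJ : SJ.Finite) (hJ : J = convexHull ℝ SJ)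
    (SI : Set (EuclideanSpace ℝ (Fin d))) (hSI : SI.Finite) (hI : I = convexHull ℝ SI)
    (hIlat : ∀ v ∈ Set.extremePoints ℝ I, IsLatticePt v) :
    (innerBd J I ∩ {u | IsLatticePt u}).ncard ≤ (outerBd J I ∩ {u | IsLatticePt u}).ncard := by
  have hJc : IsCompact J := hJ ▸ hSJ.isCompact_convexHull ℝ
  have hIc : IsCompact I := hI ▸ hSI.isCompact_convexHull ℝ
  obtain ⟨f, hinj, hf⟩ :=
    exists_injOn_add_extremePoints (hJ ▸ convex_convexHull ℝ SJ) hJc.isClosed hIc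
  have hfin : (outerBd J I ∩ {u | IsLatticePt u}).Finite :=
    (hJc.add hIc).isBounded.finite_inter_isLatticePt.subset
      fun y ⟨hy, hyl⟩ => ⟨hy.1, hyl⟩
  refine ncard_le_ncard_of_injOn f (fun x ⟨⟨hxJ, hx⟩, hxl⟩ => ?_)
    (hinj.mono fun x hx => hx.1.2) hfin
  obtain ⟨hfJ, hfI⟩ := hf x hx
  have hfx : f x = x + (f x - x) := (add_sub_cancel x (f x)).symm
  exact ⟨⟨hfx ▸ add_mem_add hxJ (extremePoints_subset hfI), hfJ⟩, hfx ▸ hxl.add (hIlat _ hfI)⟩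

theorem stmt2 {d : ℕ} (J I : Set (EuclideanSpace ℝ (Fin d)))
    (SJ : Set (EuclideanSpace ℝ (Fin d))) (hSJ : SJ.Finite) (hJ : J = convexHull ℝ SJ)
    (SI : Set (EuclideanSpace ℝ (Fin d))) (hSI : SI.Finite) (hI : I = convexHull ℝ SI)
    (hIlat : ∀ v ∈ Set.extremePoints ℝ I, IsLatticePt v)
    (hI0 : (0 : EuclideanSpace ℝ (Fin d)) ∈ I) :
    (innerBd J I ∩ {u | IsLatticePt u}).ncard ≤ (outerBd J I ∩ {u | IsLatticePt u}).ncard :=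
  stmt2_general J I SJ hSJ hJ SI hSI hI hIlat
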